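/- arXiv:2202.02805 — 5 statements merged into one kernel-verified Lean document; each statement's English description precedes it below -/
import Mathlib

section
/- Let G be a finite simple connected graph on vertex set V with at least two vertices, and let c : V → ℝ be uniquely balanced with respect to G. Then for every spanning subgraph H of G, there exists θ : V → ℝ with L_H θ = c if and only if H is connected. -/
open Matrix
open scoped Classical

def UniquelyBalanced {V : Type} [Fintype V] (G : SimpleGraph V) (c : V → ℝ) : Prop :=
  (∑ v, c v = 0) ∧
    ∀ S : Set V, S.Nonempty → S ≠ Set.univ → (G.induce S).Connected →
      ∑ v ∈ S.toFinset, c v ≠ 0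

/-!
If `L_H θ = c`, then `c` is orthogonal to the kernel of the symmetric matrix `L_H`, which contains
the indicator of every connected component of `H`; so `c` sums to zero over each component. When
`H` is disconnected, a component is a nonempty proper vertex set that induces a connected subgraph
of `G ≥ H`, which a uniquely balanced `c` forbids. Conversely, for connected `H` the kernel of `L_H`
is one-dimensional, so its range has codimension one and is exactly the hyperplane `∑ v, c v = 0`.
-/

namespace SimpleGraph

section

variable {V : Type*} {H : SimpleGraph V}

theorem ConnectedComponent.supp_ne_univ_of_not_connected (hH : ¬ H.Connected)
    (C : H.ConnectedComponent) : C.supp ≠ Set.univ := by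
  intro hC
  refine hH ((connected_iff_exists_forall_reachable H).2 ⟨C.out, fun w => ?_⟩)
  exact C.reachable_of_mem_supp C.out_eq (hC ▸ Set.mem_univ w)

theorem Connected.card_connectedComponent_eq_one [Fintype H.ConnectedComponent]
    (hH : H.Connected) : Fintype.card H.ConnectedComponent = 1 :=
  Fintype.card_eq_one_iff.2 ⟨H.connectedComponentMk hH.nonempty.some,
    fun _ => hH.preconnected.subsingleton_connectedComponent.elim _ _⟩

end

variable {V : Type*} [Fintype V] [DecidableEq V] (H : SimpleGraph V) [DecidableRel H.Adj]

theorem dotProduct_lapMatrix_mulVec_eq_zero {x : V → ℝ} (hx : H.lapMatrix ℝ *ᵥ x = 0)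
    (θ : V → ℝ) : x ⬝ᵥ H.lapMatrix ℝ *ᵥ θ = 0 := by
  rw [dotProduct_mulVec, ← mulVec_transpose, (H.isSymm_lapMatrix (R := ℝ)).eq, hx, zero_dotProduct]

theorem sum_lapMatrix_mulVec (θ : V → ℝ) : ∑ v, (H.lapMatrix ℝ *ᵥ θ) v = 0 := by
  simpa [dotProduct] using
    H.dotProduct_lapMatrix_mulVec_eq_zero (H.lapMatrix_mulVec_const_eq_zero (R := ℝ)) θ

variable {H}

theorem ConnectedComponent.sum_supp_lapMatrix_mulVec (C : H.ConnectedComponent) [Fintype C.supp]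
    (θ : V → ℝ) : ∑ v ∈ C.supp.toFinset, (H.lapMatrix ℝ *ᵥ θ) v = 0 := by
  have horth := H.dotProduct_lapMatrix_mulVec_eq_zero
    (mem_ker_toLin'_lapMatrix_of_connectedComponent C) θ
  rw [← horth, dotProduct]
  simp only [ite_mul, one_mul, zero_mul]
  rw [← Finset.sum_filter]
  congr 1
  ext v
  simp

theorem finrank_range_toLin'_lapMatrix_add_card_connectedComponent :
    Module.finrank ℝ (LinearMap.range (toLin' (H.lapMatrix ℝ))) +
      Fintype.card H.ConnectedComponent = Fintype.card V := by
  rw [card_connectedComponent_eq_finrank_ker_toLin'_lapMatrix,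
    LinearMap.finrank_range_add_finrank_ker, Module.finrank_fintype_fun_eq_card]

theorem exists_lapMatrix_mulVec_eq_iff_sum_eq_zero (hH : H.Connected) (c : V → ℝ) :
    (∃ θ, H.lapMatrix ℝ *ᵥ θ = c) ↔ ∑ v, c v = 0 := by
  let σ : Module.Dual ℝ (V → ℝ) := Fintype.linearCombination ℝ fun _ => 1
  have hσ (x : V → ℝ) : σ x = ∑ v, x v := by simp [σ, Fintype.linearCombination_apply]
  have hσ_ne : σ ≠ 0 := fun h => by
    simpa [hσ] using LinearMap.congr_fun h (Pi.single hH.nonempty.some 1)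
  have hrange_le : LinearMap.range (toLin' (H.lapMatrix ℝ)) ≤ LinearMap.ker σ := by
    rintro _ ⟨θ, rfl⟩
    simp [hσ, H.sum_lapMatrix_mulVec]
  have hrange : LinearMap.range (toLin' (H.lapMatrix ℝ)) = LinearMap.ker σ := by
    refine Submodule.eq_of_le_of_finrank_le hrange_le ?_
    have hker := Module.Dual.finrank_ker_add_one_of_ne_zero hσ_ne
    have hrange := H.finrank_range_toLin'_lapMatrix_add_card_connectedComponent
    rw [Module.finrank_fintype_fun_eq_card] at hker
    rw [hH.card_connectedComponent_eq_one] at hrange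
    omega
  simpa [hσ] using SetLike.ext_iff.1 hrange c

end SimpleGraph

theorem lapMatrix_solvable_iff_connected_of_uniquelyBalanced_general
    {V : Type} [Fintype V] [DecidableEq V]
    (G : SimpleGraph V) (hcard : 2 ≤ Fintype.card V)
    (c : V → ℝ) (hc : UniquelyBalanced G c) :
    ∀ H : SimpleGraph V, H ≤ G →
      ((∃ θ : V → ℝ, H.lapMatrix ℝ *ᵥ θ = c) ↔ H.Connected) := by
  have : Nonempty V := Fintype.card_pos_iff.mp (by omega)
  intro H hHG
  refine ⟨fun ⟨θ, hθ⟩ => ?_, fun hH => (H.exists_lapMatrix_mulVec_eq_iff_sum_eq_zero hH c).2 hc.1⟩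
  by_contra hH
  let C := H.connectedComponentMk (Classical.arbitrary V)
  exact hc.2 C.supp C.nonempty_supp (C.supp_ne_univ_of_not_connected hH)
    (C.maximal_connected_induce_supp.1.mono (SimpleGraph.comap_monotone _ hHG))
    (by rw [← hθ]; convert C.sum_supp_lapMatrix_mulVec θ)

/-- For a finite simple connected graph `G` on at least two vertices and a
uniquely balanced vector `c`, a spanning subgraph `H ≤ G` admits a solution of `L_H θ = c`
iff `H` is connected. -/
theorem lapMatrix_solvable_iff_connected_of_uniquelyBalanced
    {V : Type} [Fintype V] [DecidableEq V]
    (G : SimpleGraph V) (hG : G.Connected) (hcard : 2 ≤ Fintype.card V)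
    (c : V → ℝ) (hc : UniquelyBalanced G c) :
    ∀ H : SimpleGraph V, H ≤ G →
      ((∃ θ : V → ℝ, H.lapMatrix ℝ *ᵥ θ = c) ↔ H.Connected) :=
  lapMatrix_solvable_iff_connected_of_uniquelyBalanced_general G hcard c hc
end

section
/- Proposition 1(I): Let G be a finite simple connected graph on vertex set V with at least two vertices, let c : V → ℝ be uniquely balanced with respect to G, and let H be a spanning subgraph of G. Then every optimal solution (θ*, d₊*, d₋*) of the connectedness LP associated with (H, c) satisfies Σ_{v∈V} (d₊*(v) + d₋*(v)) = 0 if and only if H is connected. -/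
/-!
With the slack `r = L_H θ - c` split into its positive and negative parts, the connectedness LP
computes the ℓ¹-distance from `c` to the range of `L_H`; this distance is attained, since `range L_H`
is a finite-dimensional subspace. So the optimal value is `0` exactly when `c ∈ range L_H`.
Every `L_H θ` sums to zero over each connected component of `H`. If `H` is disconnected, one of its
components is a nonempty proper vertex set inducing a connected subgraph of `G ⊇ H`, on which a
uniquely balanced `c` cannot sum to zero. If `H` is connected, `ker L_H` consists of the constants,
so by counting dimensions `range L_H` is the whole hyperplane `∑ v, x v = 0`, which contains `c`.
-/

open Matrix
open scoped Classical

theorem Submodule.exists_forall_sum_abs_sub_le {V : Type*} [Fintype V]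
    (W : Submodule ℝ (V → ℝ)) (c : V → ℝ) :
    ∃ w ∈ W, ∀ x ∈ W, ∑ v, |w v - c v| ≤ ∑ v, |x v - c v| := by
  -- `WithLp 1` carries the ℓ¹ norm and is a proper space, so nearest points exist.
  set W₁ := W.comap (WithLp.linearEquiv 1 ℝ (V → ℝ)).toLinearMap
  have dist_eq (x : V → ℝ) : dist (WithLp.toLp 1 x) (WithLp.toLp 1 c) = ∑ v, |x v - c v| := by
    simp [PiLp.dist_eq_of_L1, Real.dist_eq]
  obtain ⟨w, hw, hdist⟩ := W₁.closed_of_finiteDimensional.exists_infDist_eq_dist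
    ⟨0, W₁.zero_mem⟩ (WithLp.toLp 1 c)
  refine ⟨w.ofLp, hw, fun x hx => ?_⟩
  have := Metric.infDist_le_dist_of_mem (x := WithLp.toLp 1 c) (show WithLp.toLp 1 x ∈ W₁ from hx)
  rw [← dist_eq, ← dist_eq, dist_comm, ← hdist, dist_comm]
  simpa using this

namespace ConnectednessLP

variable {V : Type*} [Fintype V] (L : Matrix V V ℝ) (c : V → ℝ)

def Feasible (θ dp dm : V → ℝ) : Prop :=
  (∀ v, 0 ≤ dp v) ∧ (∀ v, 0 ≤ dm v) ∧ L *ᵥ θ = c + dp - dm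

def cost (dp dm : V → ℝ) : ℝ := ∑ v, (dp v + dm v)

def IsOptimal (θ dp dm : V → ℝ) : Prop :=
  Feasible L c θ dp dm ∧ ∀ θ' dp' dm', Feasible L c θ' dp' dm' → cost dp dm ≤ cost dp' dm'

variable {L c}

theorem Feasible.sum_abs_le_cost {θ dp dm : V → ℝ} (h : Feasible L c θ dp dm) :
    ∑ v, |(L *ᵥ θ) v - c v| ≤ cost dp dm := by
  refine Finset.sum_le_sum fun v _ => abs_le.mpr ?_
  have := congrFun h.2.2 v
  simp only [Pi.add_apply, Pi.sub_apply] at this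
  constructor <;> linarith [h.1 v, h.2.1 v]

theorem Feasible.mulVec_eq_of_cost_eq_zero {θ dp dm : V → ℝ} (h : Feasible L c θ dp dm)
    (h0 : cost dp dm = 0) : L *ᵥ θ = c := by
  have hterm := (Finset.sum_eq_zero_iff_of_nonneg fun v _ => add_nonneg (h.1 v) (h.2.1 v)).mp h0
  funext v
  have := congrFun h.2.2 v
  simp only [Pi.add_apply, Pi.sub_apply] at this
  linarith [h.1 v, h.2.1 v, hterm v (Finset.mem_univ v)]

variable (L c) in
theorem feasible_posPart_negPart (θ : V → ℝ) :
    Feasible L c θ (L *ᵥ θ - c)⁺ (L *ᵥ θ - c)⁻ :=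
  ⟨fun v => posPart_nonneg _, fun v => negPart_nonneg _, by
    rw [add_sub_assoc, posPart_sub_negPart, add_sub_cancel]⟩

theorem cost_posPart_negPart (r : V → ℝ) : cost r⁺ r⁻ = ∑ v, |r v| :=
  Finset.sum_congr rfl fun v _ => posPart_add_negPart (r v)

variable (L c) in
theorem exists_isOptimal : ∃ θ dp dm, IsOptimal L c θ dp dm := by
  obtain ⟨_, ⟨θ, rfl⟩, hmin⟩ := (LinearMap.range L.mulVecLin).exists_forall_sum_abs_sub_le c
  refine ⟨θ, _, _, feasible_posPart_negPart L c θ, fun θ' dp' dm' h' => ?_⟩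
  rw [cost_posPart_negPart]
  exact (hmin _ ⟨θ', rfl⟩).trans h'.sum_abs_le_cost

theorem IsOptimal.cost_eq_zero {θ dp dm θ₀ : V → ℝ} (h : IsOptimal L c θ dp dm)
    (hθ₀ : L *ᵥ θ₀ = c) : cost dp dm = 0 := by
  have hle := h.2 θ₀ 0 0 ⟨fun _ => le_rfl, fun _ => le_rfl, by simp [hθ₀]⟩
  have hnonneg : 0 ≤ cost dp dm := Finset.sum_nonneg fun v _ => add_nonneg (h.1.1 v) (h.1.2.1 v)
  simp only [cost, Pi.zero_apply, add_zero, Finset.sum_const_zero] at hle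
  exact le_antisymm hle hnonneg

end ConnectednessLP

namespace SimpleGraph

variable {V : Type*} [Fintype V] [DecidableEq V] {H : SimpleGraph V} [DecidableRel H.Adj]

theorem sum_lapMatrix_mulVec_eq_zero {s : Finset V}
    (hs : ∀ u v, H.Reachable u v → (u ∈ s ↔ v ∈ s)) (θ : V → ℝ) :
    ∑ v ∈ s, (H.lapMatrix ℝ *ᵥ θ) v = 0 := by
  let x : V → ℝ := fun v => if v ∈ s then 1 else 0
  have hx : H.lapMatrix ℝ *ᵥ x = 0 :=
    (H.lapMatrix_mulVec_eq_zero_iff_forall_reachable).mpr fun u v huv => by simp [x, hs u v huv]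
  calc ∑ v ∈ s, (H.lapMatrix ℝ *ᵥ θ) v = x ⬝ᵥ (H.lapMatrix ℝ *ᵥ θ) := by
        simp [x, dotProduct, Finset.sum_ite_mem]
    _ = (H.lapMatrix ℝ *ᵥ x) ⬝ᵥ θ := by
        rw [dotProduct_mulVec, ← mulVec_transpose, (H.isSymm_lapMatrix ℝ).eq]
    _ = 0 := by rw [hx, zero_dotProduct]

theorem Connected.exists_lapMatrix_mulVec_eq (hH : H.Connected) {c : V → ℝ}
    (hc : ∑ v, c v = 0) : ∃ θ, H.lapMatrix ℝ *ᵥ θ = c := by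
  have : Nonempty V := hH.nonempty
  let T := toLin' (H.lapMatrix ℝ)
  let s : (V → ℝ) →ₗ[ℝ] ℝ := ∑ v, LinearMap.proj v
  have hs (x : V → ℝ) : s x = ∑ v, x v := by simp [s]
  have hrange_le : LinearMap.range T ≤ LinearMap.ker s := by
    rintro _ ⟨θ, rfl⟩
    simpa [hs, T] using sum_lapMatrix_mulVec_eq_zero (s := Finset.univ) (by simp) θ
  have hker_ne : LinearMap.ker s ≠ ⊤ := by
    intro htop
    have h1 : (1 : V → ℝ) ∈ LinearMap.ker s := htop ▸ Submodule.mem_top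
    simp [hs] at h1
  have hfinrank_ker : Module.finrank ℝ (LinearMap.ker T) = 1 := by
    have := hH.preconnected.subsingleton_connectedComponent
    rw [← card_connectedComponent_eq_finrank_ker_toLin'_lapMatrix]
    exact Fintype.card_eq_one_iff.mpr ⟨H.connectedComponentMk hH.nonempty.some,
      fun _ => Subsingleton.elim _ _⟩
  have hfinrank : Module.finrank ℝ (LinearMap.ker s) ≤ Module.finrank ℝ (LinearMap.range T) := by
    have hrank := T.finrank_range_add_finrank_ker
    have hlt := Submodule.finrank_lt hker_ne
    rw [Module.finrank_fintype_fun_eq_card] at hrank hlt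
    omega
  show c ∈ LinearMap.range T
  rw [Submodule.eq_of_le_of_finrank_le hrange_le hfinrank, LinearMap.mem_ker, hs]
  exact hc

end SimpleGraph

theorem UniquelyBalanced.connected_of_lapMatrix_mulVec_eq {V : Type} [Fintype V] [DecidableEq V]
    [Nonempty V] {G H : SimpleGraph V} [DecidableRel H.Adj] {c θ : V → ℝ}
    (hc : UniquelyBalanced G c) (hHG : H ≤ G) (hθ : H.lapMatrix ℝ *ᵥ θ = c) : H.Connected := by
  by_contra hH
  obtain ⟨u⟩ := ‹Nonempty V›
  obtain ⟨w, huw⟩ : ∃ w, ¬H.Reachable u w := by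
    by_contra! h
    exact hH ((H.connected_iff_exists_forall_reachable).mpr ⟨u, h⟩)
  let C := H.connectedComponentMk u
  have hconn : (G.induce C.supp).Connected :=
    (C.maximal_connected_induce_supp.1).mono (SimpleGraph.comap_monotone _ hHG)
  refine hc.2 C.supp ⟨u, rfl⟩ (fun h => huw ?_) hconn ?_
  · exact (SimpleGraph.ConnectedComponent.eq.mp (h ▸ Set.mem_univ w : w ∈ C.supp)).symm
  · rw [← hθ]
    refine SimpleGraph.sum_lapMatrix_mulVec_eq_zero (fun a b hab => ?_) θ
    simp only [Set.mem_toFinset, SimpleGraph.ConnectedComponent.mem_supp_iff,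
      SimpleGraph.ConnectedComponent.sound hab]

open ConnectednessLP in
theorem prop1_I_general
    {V : Type} [Fintype V] [DecidableEq V]
    (G : SimpleGraph V) (hcard : 2 ≤ Fintype.card V)
    (c : V → ℝ) (hc : UniquelyBalanced G c)
    (H : SimpleGraph V) (hHG : H ≤ G) :
    (∀ θ dp dm : V → ℝ,
        ((∀ v, 0 ≤ dp v) ∧ (∀ v, 0 ≤ dm v) ∧ H.lapMatrix ℝ *ᵥ θ = c + dp - dm) →
        (∀ θ' dp' dm' : V → ℝ,
          ((∀ v, 0 ≤ dp' v) ∧ (∀ v, 0 ≤ dm' v) ∧ H.lapMatrix ℝ *ᵥ θ' = c + dp' - dm') →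
          ∑ v, (dp v + dm v) ≤ ∑ v, (dp' v + dm' v)) →
        ∑ v, (dp v + dm v) = 0)
      ↔ H.Connected := by
  have : Nonempty V := Fintype.card_pos_iff.mp (by omega)
  constructor
  · intro hzero
    obtain ⟨θ, dp, dm, hfeas, hopt⟩ := exists_isOptimal (H.lapMatrix ℝ) c
    exact hc.connected_of_lapMatrix_mulVec_eq hHG
      (hfeas.mulVec_eq_of_cost_eq_zero (hzero θ dp dm hfeas hopt))
  · intro hH θ dp dm hfeas hopt
    obtain ⟨θ₀, hθ₀⟩ := hH.exists_lapMatrix_mulVec_eq hc.1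
    exact IsOptimal.cost_eq_zero ⟨hfeas, hopt⟩ hθ₀

/-- **Proposition 1(I).** Let `G` be a finite simple connected graph on at least
two vertices, `c` uniquely balanced w.r.t. `G`, and `H ≤ G` a spanning subgraph. Every optimal
solution `(θ*, d₊*, d₋*)` of the connectedness LP for `(H, c)` satisfies
`Σ (d₊* + d₋*) = 0` iff `H` is connected. -/
theorem prop1_I
    {V : Type} [Fintype V] [DecidableEq V]
    (G : SimpleGraph V) (hG : G.Connected) (hcard : 2 ≤ Fintype.card V)
    (c : V → ℝ) (hc : UniquelyBalanced G c)
    (H : SimpleGraph V) (hHG : H ≤ G) :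
    (∀ θ dp dm : V → ℝ,
        ((∀ v, 0 ≤ dp v) ∧ (∀ v, 0 ≤ dm v) ∧ H.lapMatrix ℝ *ᵥ θ = c + dp - dm) →
        (∀ θ' dp' dm' : V → ℝ,
          ((∀ v, 0 ≤ dp' v) ∧ (∀ v, 0 ≤ dm' v) ∧ H.lapMatrix ℝ *ᵥ θ' = c + dp' - dm') →
          ∑ v, (dp v + dm v) ≤ ∑ v, (dp' v + dm' v)) →
        ∑ v, (dp v + dm v) = 0)
      ↔ H.Connected :=
  prop1_I_general G hcard c hc H hHG
end

section
/- Proposition 1(III), necessity direction: Let G be a finite simple connected graph on vertex set V, λ ∈ ℕ, 𝒩(λ) the family of λ-cut remainder sets of G, n_u ∈ ℕ an upper bound on the number of connected components obtained by deleting at most λ edges from G, and r ≥ 0. Let c : V → ℝ satisfy Σ_{v∈V} c(v) = 0 and |Σ_{v∈N} c(v)| ≤ r for every N ∈ 𝒩(λ). Call a spanning subgraph H of G W(λ)-disconnected if H is disconnected, H has at most n_u connected components, and the vertex set of every connected component of H either belongs to 𝒩(λ) or is the complement in V of a member of 𝒩(λ). If a spanning subgraph H of G is connected or W(λ)-disconnected,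 then val(H, c) ≤ n_u · r. -/
open Matrix
open scoped Classical

/-- The optimal value `val(H, c)` of the connectedness LP: minimize `Σ (d₊ + d₋)` over
`θ, d₊, d₋ : V → ℝ` subject to `d₊ ≥ 0`, `d₋ ≥ 0` and `L_H θ = c + d₊ − d₋`. -/
noncomputable def lpVal {V : Type} [Fintype V] [DecidableEq V]
    (H : SimpleGraph V) (c : V → ℝ) : ℝ :=
  sInf {x : ℝ | ∃ θ dp dm : V → ℝ, (∀ v, 0 ≤ dp v) ∧ (∀ v, 0 ≤ dm v) ∧
    H.lapMatrix ℝ *ᵥ θ = c + dp - dm ∧ x = ∑ v, (dp v + dm v)}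

/-- `N ⊊ V` is a *λ-cut remainder set* of `G` if deleting some set `L` of at most `λ` edges of
`G` leaves a disconnected graph in which `V ∖ N` is a connected component of maximum
cardinality. -/
def IsLamCutRemainder {V : Type} [Fintype V] (G : SimpleGraph V) (lam : ℕ)
    (N : Set V) : Prop :=
  N ≠ Set.univ ∧
    ∃ L : Set (Sym2 V), L ⊆ G.edgeSet ∧ L.ncard ≤ lam ∧
      ¬ (G.deleteEdges L).Connected ∧
      ∃ C : (G.deleteEdges L).ConnectedComponent, C.supp = Nᶜ ∧
        ∀ C' : (G.deleteEdges L).ConnectedComponent, C'.supp.ncard ≤ C.supp.ncard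

/-! The LP value is at most `∑_C |∑_{v ∈ C} c v|` over the components `C` of `H`: placing the
correction `-∑_{v ∈ C} c v` at one vertex of each component makes every component sum of the
right-hand side vanish, and such vectors lie in the range of the symmetric matrix `L_H`, whose
kernel consists of the functions constant on components. If `H` is connected this bound is
`|∑_V c| = 0`; if `H` is W(λ)-disconnected, each of its at most `n_u` terms is at most `r`, for a
complement of a cut remainder set because `∑_V c = 0`. -/

theorem Matrix.IsHermitian.exists_mulVec_eq {𝕜 n : Type*} [RCLike 𝕜] [Fintype n] [DecidableEq n]
    {A : Matrix n n 𝕜} (hA : A.IsHermitian) {b : n → 𝕜}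
    (hb : ∀ z, A *ᵥ z = 0 → b ⬝ᵥ star z = 0) : ∃ θ, A *ᵥ θ = b := by
  set T := toEuclideanLin A
  have hT : T.IsSymmetric := isSymmetric_toEuclideanLin_iff.mpr hA
  have hb_range : WithLp.toLp 2 b ∈ LinearMap.range T := by
    rw [← Submodule.orthogonal_orthogonal (LinearMap.range T), hT.orthogonal_range]
    intro z hz
    rw [EuclideanSpace.inner_eq_star_dotProduct]
    exact hb z.ofLp (by simpa [T] using congrArg WithLp.ofLp (LinearMap.mem_ker.mp hz))
  obtain ⟨θ, hθ⟩ := hb_range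
  exact ⟨θ.ofLp, by simpa [T] using congrArg WithLp.ofLp hθ⟩

theorem Finset.sum_compl_eq_neg_of_sum_eq_zero {ι M : Type*} [Fintype ι] [DecidableEq ι]
    [AddCommGroup M] {f : ι → M} (hf : ∑ i, f i = 0) (s : Finset ι) :
    ∑ i ∈ sᶜ, f i = -∑ i ∈ s, f i :=
  eq_neg_of_add_eq_zero_left ((Finset.sum_compl_add_sum s f).trans hf)

namespace SimpleGraph

variable {V : Type*}

@[simp]
theorem ConnectedComponent.connectedComponentMk_out {H : SimpleGraph V} (C : H.ConnectedComponent) :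
    H.connectedComponentMk C.out = C :=
  C.out_eq

theorem Preconnected.supp_eq_univ {H : SimpleGraph V} (hH : H.Preconnected)
    (C : H.ConnectedComponent) : C.supp = Set.univ :=
  Set.eq_univ_of_forall fun v =>
    (ConnectedComponent.mem_supp_iff C v).mpr (hH.subsingleton_connectedComponent.elim _ _)

variable [Fintype V] [DecidableEq V] (H : SimpleGraph V)

theorem sum_eq_sum_connectedComponent {M : Type*} [AddCommMonoid M] (f : V → M) :
    ∑ v, f v = ∑ C : H.ConnectedComponent, ∑ v ∈ C.supp.toFinset, f v := by
  rw [← Finset.sum_fiberwise Finset.univ H.connectedComponentMk f]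
  refine Finset.sum_congr rfl fun C _ => Finset.sum_congr ?_ fun _ _ => rfl
  ext v
  simp [ConnectedComponent.mem_supp_iff]

theorem ConnectedComponent.sum_supp_eq_out {H : SimpleGraph V} {M : Type*} [AddCommMonoid M]
    (C : H.ConnectedComponent) {g : V → M}
    (hg : ∀ v, v ≠ (H.connectedComponentMk v).out → g v = 0) :
    ∑ v ∈ C.supp.toFinset, g v = g C.out := by
  refine Finset.sum_eq_single_of_mem _ (by simp [ConnectedComponent.mem_supp_iff]) fun v hv hne => ?_
  refine hg v fun h => hne ?_
  rw [h, (ConnectedComponent.mem_supp_iff C v).mp (Set.mem_toFinset.mp hv)]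

theorem exists_lapMatrix_mulVec_eq {b : V → ℝ}
    (hb : ∀ C : H.ConnectedComponent, ∑ v ∈ C.supp.toFinset, b v = 0) :
    ∃ θ, H.lapMatrix ℝ *ᵥ θ = b := by
  refine (H.posSemidef_lapMatrix ℝ).isHermitian.exists_mulVec_eq fun z hz => ?_
  have hconst := (H.lapMatrix_mulVec_eq_zero_iff_forall_reachable).mp hz
  have hz_out : ∀ C : H.ConnectedComponent, ∀ v ∈ C.supp.toFinset, z v = z C.out := by
    intro C v hv
    refine hconst v C.out (ConnectedComponent.exact ?_)
    rw [(ConnectedComponent.mem_supp_iff C v).mp (Set.mem_toFinset.mp hv),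
      C.connectedComponentMk_out]
  simp only [dotProduct, star_trivial, H.sum_eq_sum_connectedComponent]
  refine Finset.sum_eq_zero fun C _ => ?_
  rw [Finset.sum_congr rfl fun v hv => by rw [hz_out C v hv], ← Finset.sum_mul, hb C, zero_mul]

end SimpleGraph

theorem lpVal_le_sum_abs_of_mulVec_eq {V : Type} [Fintype V] [DecidableEq V] {H : SimpleGraph V}
    {c d θ : V → ℝ} (hθ : H.lapMatrix ℝ *ᵥ θ = c + d) : lpVal H c ≤ ∑ v, |d v| := by
  refine csInf_le ⟨0, ?_⟩ ⟨θ, fun v => (d v)⁺, fun v => (d v)⁻, fun v => posPart_nonneg _,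
    fun v => negPart_nonneg _, ?_, by simp only [posPart_add_negPart]⟩
  · rintro x ⟨-, dp, dm, hdp, hdm, -, rfl⟩
    exact Finset.sum_nonneg fun v _ => add_nonneg (hdp v) (hdm v)
  · ext v
    simp [hθ, add_sub_assoc, posPart_sub_negPart]

theorem lpVal_le_sum_abs_sum_connectedComponent {V : Type} [Fintype V] [DecidableEq V]
    (H : SimpleGraph V) (c : V → ℝ) :
    lpVal H c ≤ ∑ C : H.ConnectedComponent, |∑ v ∈ C.supp.toFinset, c v| := by
  set s : H.ConnectedComponent → ℝ := fun C => ∑ v ∈ C.supp.toFinset, c v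
  set d : V → ℝ := fun v =>
    if v = (H.connectedComponentMk v).out then -s (H.connectedComponentMk v) else 0
  have hd : ∀ v, v ≠ (H.connectedComponentMk v).out → d v = 0 := fun v hv => if_neg hv
  have hd_sum (C : H.ConnectedComponent) : ∑ v ∈ C.supp.toFinset, d v = -s C := by
    rw [C.sum_supp_eq_out hd]
    simp [d]
  have hd_abs (C : H.ConnectedComponent) : ∑ v ∈ C.supp.toFinset, |d v| = |s C| := by
    rw [C.sum_supp_eq_out (g := fun v => |d v|) fun v hv => by rw [hd v hv, abs_zero]]
    simp [d]
  obtain ⟨θ, hθ⟩ := H.exists_lapMatrix_mulVec_eq (b := c + d) fun C => by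
    simp only [Pi.add_apply, Finset.sum_add_distrib, hd_sum, s, add_neg_cancel]
  calc lpVal H c ≤ ∑ v, |d v| := lpVal_le_sum_abs_of_mulVec_eq hθ
    _ = ∑ C : H.ConnectedComponent, |s C| := by
      rw [H.sum_eq_sum_connectedComponent]
      exact Finset.sum_congr rfl fun C _ => hd_abs C

theorem prop1_III_necessity_general
    {V : Type} [Fintype V] [DecidableEq V]
    (G : SimpleGraph V) (lam : ℕ) (nu : ℕ) (r : ℝ) (hr : 0 ≤ r)
    (c : V → ℝ) (hsum : ∑ v, c v = 0)
    (hcr : ∀ N : Set V, IsLamCutRemainder G lam N → |∑ v ∈ N.toFinset, c v| ≤ r)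
    (H : SimpleGraph V)
    (hH : H.Connected ∨
      (¬ H.Connected ∧ Nat.card H.ConnectedComponent ≤ nu ∧
        ∀ C : H.ConnectedComponent,
          IsLamCutRemainder G lam C.supp ∨ IsLamCutRemainder G lam C.suppᶜ)) :
    lpVal H c ≤ (nu : ℝ) * r := by
  refine (lpVal_le_sum_abs_sum_connectedComponent H c).trans ?_
  rcases hH with hconn | ⟨-, hcard, hcomp⟩
  · have hzero (C : H.ConnectedComponent) : ∑ v ∈ C.supp.toFinset, c v = 0 := by
      rw [Set.toFinset_congr (hconn.preconnected.supp_eq_univ C), Set.toFinset_univ, hsum]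
    simp only [hzero, abs_zero, Finset.sum_const_zero]
    positivity
  · have hle (C : H.ConnectedComponent) : |∑ v ∈ C.supp.toFinset, c v| ≤ r := by
      rcases hcomp C with hC | hC
      · -- the two `toFinset`s differ only in the `Fintype` instance on `C.supp`
        convert hcr _ hC using 3
        ext v
        simp
      · have h := hcr _ hC
        rw [Set.toFinset_compl, Finset.sum_compl_eq_neg_of_sum_eq_zero hsum, abs_neg] at h
        convert h using 3
    calc ∑ C : H.ConnectedComponent, |∑ v ∈ C.supp.toFinset, c v|
        ≤ Finset.univ.card • r := Finset.sum_le_card_nsmul _ _ _ fun C _ => hle C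
      _ ≤ nu * r := by
        rw [nsmul_eq_mul, Finset.card_univ, ← Nat.card_eq_fintype_card]
        gcongr

/-- **Proposition 1(III), necessity.** Let `G` be a finite simple connected graph,
`n_u` an upper bound on the number of connected components obtainable by deleting at most `λ`
edges from `G`, `r ≥ 0`, and `c : V → ℝ` with zero sum and `|Σ_{v ∈ N} c v| ≤ r` for every
λ-cut remainder set `N`. If a spanning subgraph `H ≤ G` is connected or W(λ)-disconnected
(disconnected, with at most `n_u` components, every component's vertex set being a λ-cut
remainder set or the complement of one), then `val(H, c) ≤ n_u · r`. -/
theorem prop1_III_necessity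
    {V : Type} [Fintype V] [DecidableEq V]
    (G : SimpleGraph V) (hG : G.Connected) (lam : ℕ) (nu : ℕ) (r : ℝ) (hr : 0 ≤ r)
    (hnu : ∀ L : Set (Sym2 V), L ⊆ G.edgeSet → L.ncard ≤ lam →
      Nat.card (G.deleteEdges L).ConnectedComponent ≤ nu)
    (c : V → ℝ) (hsum : ∑ v, c v = 0)
    (hcr : ∀ N : Set V, IsLamCutRemainder G lam N → |∑ v ∈ N.toFinset, c v| ≤ r)
    (H : SimpleGraph V) (hHG : H ≤ G)
    (hH : H.Connected ∨
      (¬ H.Connected ∧ Nat.card H.ConnectedComponent ≤ nu ∧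
        ∀ C : H.ConnectedComponent,
          IsLamCutRemainder G lam C.supp ∨ IsLamCutRemainder G lam C.suppᶜ)) :
    lpVal H c ≤ (nu : ℝ) * r :=
  prop1_III_necessity_general G lam nu r hr c hsum hcr H hH
end

section
/- Proposition 1(III), sufficiency direction: Let G be a finite simple connected graph on vertex set V with at least two vertices, λ ∈ ℕ, 𝒩(λ) the family of λ-cut remainder sets of G, n_u ∈ ℕ, and r ∈ ℝ. Let c : V → ℝ be uniquely balanced with respect to G and satisfy |Σ_{v∈S} c(v)| ≥ n_u · r for every nonempty proper subset S ⊊ V with G[S] connected such that S ∉ 𝒩(λ) and V ∖ S ∉ 𝒩(λ). If a spanning subgraph H of G satisfies val(H, c) ≤ n_u · r, then H is connected, or the vertex set of every connected component of H either belongs to 𝒩(λ) or is the complement in V of a member of 𝒩(λ). -/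
open Matrix
open scoped Classical

lemma supp_closed_adj {V : Type} {H : SimpleGraph V} (C : H.ConnectedComponent)
    {v u : V} (hv : v ∈ C.supp) (h : H.Adj v u) : u ∈ C.supp := by
  rw [SimpleGraph.ConnectedComponent.mem_supp_iff] at hv ⊢
  rw [← hv]
  exact SimpleGraph.ConnectedComponent.sound h.symm.reachable

lemma walk_reach_induce {V : Type} {H : SimpleGraph V} (C : H.ConnectedComponent) :
    ∀ {u v : V} (_ : H.Walk u v) (hu : u ∈ C.supp) (hv : v ∈ C.supp),
      (H.induce C.supp).Reachable ⟨u, hu⟩ ⟨v, hv⟩ := by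
  intro u v p
  induction p with
  | nil => intro hu hv; exact SimpleGraph.Reachable.refl _
  | @cons a b d hab q ih =>
    intro ha hd
    have hb : b ∈ C.supp := supp_closed_adj C ha hab
    have hadj : (H.induce C.supp).Adj ⟨a, ha⟩ ⟨b, hb⟩ := hab
    exact hadj.reachable.trans (ih hb hd)

lemma induce_supp_connected {V : Type} {H : SimpleGraph V} (C : H.ConnectedComponent) :
    (H.induce C.supp).Connected := by
  obtain ⟨x, hx⟩ := C.exists_rep
  have hxC : x ∈ C.supp := hx
  have : Nonempty ↥C.supp := ⟨⟨x, hxC⟩⟩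
  refine ⟨fun a b => ?_⟩
  obtain ⟨a, ha⟩ := a
  obtain ⟨b, hb⟩ := b
  have hr : H.Reachable a b := by
    have h1 : H.connectedComponentMk a = C := ha
    have h2 : H.connectedComponentMk b = C := hb
    exact SimpleGraph.ConnectedComponent.exact (h1.trans h2.symm)
  obtain ⟨p⟩ := hr
  exact walk_reach_induce C p ha hb

lemma lap_sum_supp {V : Type} [Fintype V] [DecidableEq V] {H : SimpleGraph V}
    (C : H.ConnectedComponent) (θ : V → ℝ) :
    ∑ v ∈ C.supp.toFinset, (H.lapMatrix ℝ *ᵥ θ) v = 0 := by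
  classical
  have hrow : ∀ v : V, (H.lapMatrix ℝ *ᵥ θ) v
      = ∑ u : V, (if H.Adj v u then θ v - θ u else 0) := by
    intro v
    rw [SimpleGraph.lapMatrix_mulVec_apply]
    have hdeg : (H.degree v : ℝ) * θ v = ∑ u : V, (if H.Adj v u then θ v else 0) := by
      rw [SimpleGraph.degree_eq_sum_if_adj, Finset.sum_mul]
      simp [ite_mul]
    have hnbr : ∑ u ∈ H.neighborFinset v, θ u = ∑ u : V, (if H.Adj v u then θ u else 0) := by
      rw [← Finset.sum_filter]
      congr 1
      ext u
      simp [SimpleGraph.mem_neighborFinset]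
    rw [hdeg, hnbr, ← Finset.sum_sub_distrib]
    congr 1
    ext u
    by_cases h : H.Adj v u <;> simp [h]
  set S := C.supp.toFinset with hS
  have hmemS : ∀ v, v ∈ S ↔ v ∈ C.supp := by intro v; simp [hS]
  have hstep : ∑ v ∈ S, (H.lapMatrix ℝ *ᵥ θ) v
      = ∑ v ∈ S, ∑ u ∈ S, (if H.Adj v u then θ v - θ u else 0) := by
    refine Finset.sum_congr rfl fun v hv => ?_
    rw [hrow v]
    refine (Finset.sum_subset (Finset.subset_univ S) fun u _ hu => ?_).symm
    have : ¬ H.Adj v u := fun h => hu ((hmemS u).mpr (supp_closed_adj C ((hmemS v).mp hv) h))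
    simp [this]
  rw [hstep]
  have hswap : ∑ v ∈ S, ∑ u ∈ S, (if H.Adj v u then θ v - θ u else 0)
      = - ∑ v ∈ S, ∑ u ∈ S, (if H.Adj v u then θ v - θ u else 0) := by
    conv_lhs => rw [Finset.sum_comm]
    rw [← Finset.sum_neg_distrib]
    refine Finset.sum_congr rfl fun v _ => ?_
    rw [← Finset.sum_neg_distrib]
    refine Finset.sum_congr rfl fun u _ => ?_
    by_cases h : H.Adj v u
    · rw [if_pos h.symm, if_pos h]; ring
    · rw [if_neg (fun h' : H.Adj u v => h h'.symm), if_neg h, neg_zero]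
  linarith [hswap]

/-- **Proposition 1(III), sufficiency.** Let `G` be a finite simple connected
graph on at least two vertices and `c` uniquely balanced w.r.t. `G`, with
`|Σ_{v ∈ S} c v| ≥ n_u · r` for every nonempty proper `S ⊊ V` inducing a connected subgraph
such that neither `S` nor `V ∖ S` is a λ-cut remainder set. If a spanning subgraph `H ≤ G`
satisfies `val(H, c) ≤ n_u · r`, then `H` is connected, or the vertex set of every connected
component of `H` is a λ-cut remainder set or the complement of one. -/
theorem prop1_III_sufficiency
    {V : Type} [Fintype V] [DecidableEq V]
    (G : SimpleGraph V) (hG : G.Connected) (hcard : 2 ≤ Fintype.card V)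
    (lam : ℕ) (nu : ℕ) (r : ℝ)
    (c : V → ℝ) (hc : UniquelyBalanced G c)
    (hbig : ∀ S : Set V, S.Nonempty → S ≠ Set.univ → (G.induce S).Connected →
      ¬ IsLamCutRemainder G lam S → ¬ IsLamCutRemainder G lam Sᶜ →
      (nu : ℝ) * r ≤ |∑ v ∈ S.toFinset, c v|)
    (H : SimpleGraph V) (hHG : H ≤ G)
    (hval : lpVal H c ≤ (nu : ℝ) * r) :
    H.Connected ∨
      ∀ C : H.ConnectedComponent,
        IsLamCutRemainder G lam C.supp ∨ IsLamCutRemainder G lam C.suppᶜ := by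
  by_cases hconn : H.Connected
  · exact Or.inl hconn
  right
  intro C
  by_contra hcon
  push_neg at hcon
  obtain ⟨h1, h2⟩ := hcon
  have hV : Nonempty V := Fintype.card_pos_iff.mp (by omega)
  obtain ⟨u0, w0, huw⟩ : ∃ u w, ¬ H.Reachable u w := by
    by_contra h
    push_neg at h
    exact hconn ⟨fun a b => h a b⟩
  obtain ⟨x, hx⟩ := C.exists_rep
  have hxC : x ∈ C.supp := hx
  obtain ⟨w, hwC⟩ : ∃ w, w ∉ C.supp := by
    by_contra h
    push_neg at h
    have hu : H.connectedComponentMk u0 = C := h u0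
    have hw : H.connectedComponentMk w0 = C := h w0
    exact huw (SimpleGraph.ConnectedComponent.exact (hu.trans hw.symm))
  set C' := H.connectedComponentMk w with hC'
  have hwC' : w ∈ C'.supp := rfl
  have hCC' : C' ≠ C := by
    intro h
    exact hwC (by rw [SimpleGraph.ConnectedComponent.mem_supp_iff]; exact h)
  have hxC' : x ∉ C'.supp := by
    intro h
    rw [SimpleGraph.ConnectedComponent.mem_supp_iff] at h hxC
    exact hCC' (h.symm.trans hxC)
  have hdisj : Disjoint C.supp.toFinset C'.supp.toFinset := by
    rw [Finset.disjoint_left]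
    intro a ha ha'
    rw [Set.mem_toFinset, SimpleGraph.ConnectedComponent.mem_supp_iff] at ha ha'
    exact hCC' (ha'.symm.trans ha)
  have hS1ne : C.supp.Nonempty := ⟨x, hxC⟩
  have hS1univ : C.supp ≠ Set.univ := fun h => hwC (h ▸ Set.mem_univ w)
  have hS1conn : (G.induce C.supp).Connected :=
    (induce_supp_connected C).mono (fun a b hab => hHG hab)
  have hS2ne : C'.supp.Nonempty := ⟨w, hwC'⟩
  have hS2univ : C'.supp ≠ Set.univ := fun h => hxC' (h ▸ Set.mem_univ x)
  have hS2conn : (G.induce C'.supp).Connected :=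
    (induce_supp_connected C').mono (fun a b hab => hHG hab)
  have hFeq : ∀ (D : H.ConnectedComponent) (F1 F2 : Fintype ↥D.supp),
      @Set.toFinset V D.supp F1 = @Set.toFinset V D.supp F2 := by
    intro D F1 F2
    rw [Subsingleton.elim F1 F2]
  have hb1 : (nu : ℝ) * r ≤ |∑ v ∈ C.supp.toFinset, c v| := by
    have h := hbig C.supp hS1ne hS1univ hS1conn h1 h2
    rwa [hFeq C _ inferInstance] at h
  have hb2 : (0:ℝ) < |∑ v ∈ C'.supp.toFinset, c v| := by
    have h := hc.2 C'.supp hS2ne hS2univ hS2conn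
    rw [hFeq C' _ inferInstance] at h
    exact abs_pos.mpr h
  set ε := |∑ v ∈ C'.supp.toFinset, c v| with hε
  set T := {y : ℝ | ∃ θ dp dm : V → ℝ, (∀ v, 0 ≤ dp v) ∧ (∀ v, 0 ≤ dm v) ∧
    H.lapMatrix ℝ *ᵥ θ = c + dp - dm ∧ y = ∑ v, (dp v + dm v)} with hT
  have hTne : T.Nonempty := by
    refine ⟨∑ v, ((fun v => max (-(c v)) 0) v + (fun v => max (c v) 0) v),
      (fun _ => 0), (fun v => max (-(c v)) 0), (fun v => max (c v) 0),
      fun v => le_max_right _ _, fun v => le_max_right _ _, ?_, rfl⟩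
    ext v
    simp only [Matrix.mulVec, dotProduct, mul_zero, Finset.sum_const_zero, Pi.sub_apply,
      Pi.add_apply]
    have := max_zero_sub_max_neg_zero_eq_self (c v)
    linarith
  have hlow : ∀ y ∈ T, (nu : ℝ) * r + ε ≤ y := by
    rintro y ⟨θ, dp, dm, hdp, hdm, heq, hy⟩
    have hcomp : ∀ (D : H.ConnectedComponent),
        |∑ v ∈ D.supp.toFinset, c v| ≤ ∑ v ∈ D.supp.toFinset, (dp v + dm v) := by
      intro D
      have h0 := lap_sum_supp D θ
      have hcv : ∀ v, c v = (H.lapMatrix ℝ *ᵥ θ) v - dp v + dm v := by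
        intro v
        have := congrFun heq v
        simp only [Pi.sub_apply, Pi.add_apply] at this
        linarith
      have hsum : ∑ v ∈ D.supp.toFinset, c v
          = ∑ v ∈ D.supp.toFinset, dm v - ∑ v ∈ D.supp.toFinset, dp v := by
        rw [Finset.sum_congr rfl fun v _ => hcv v]
        rw [Finset.sum_add_distrib, Finset.sum_sub_distrib, h0]
        ring
      rw [hsum, Finset.sum_add_distrib]
      have h1' : (0:ℝ) ≤ ∑ v ∈ D.supp.toFinset, dp v :=
        Finset.sum_nonneg fun v _ => hdp v
      have h2' : (0:ℝ) ≤ ∑ v ∈ D.supp.toFinset, dm v :=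
        Finset.sum_nonneg fun v _ => hdm v
      rw [abs_sub_comm, abs_le]
      constructor <;> linarith
    have hsplit : ∑ v ∈ C.supp.toFinset, (dp v + dm v)
        + ∑ v ∈ C'.supp.toFinset, (dp v + dm v) ≤ ∑ v, (dp v + dm v) := by
      rw [← Finset.sum_union hdisj]
      exact Finset.sum_le_sum_of_subset_of_nonneg (Finset.subset_univ _)
        (fun i _ _ => add_nonneg (hdp i) (hdm i))
    have := hcomp C
    have := hcomp C'
    rw [hy]
    calc (nu : ℝ) * r + ε
        ≤ |∑ v ∈ C.supp.toFinset, c v| + |∑ v ∈ C'.supp.toFinset, c v| := by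
          rw [hε]; linarith
      _ ≤ ∑ v ∈ C.supp.toFinset, (dp v + dm v)
          + ∑ v ∈ C'.supp.toFinset, (dp v + dm v) := by linarith [hcomp C, hcomp C']
      _ ≤ ∑ v, (dp v + dm v) := hsplit
  have hge : (nu : ℝ) * r + ε ≤ sInf T := le_csInf hTne hlow
  have hlp : lpVal H c = sInf T := rfl
  linarith
end

section
/- Correctness of the mixed-integer linear program for constructing W(λ)-uniquely balanced vectors: Let G be a finite simple connected graph on vertex set V with at least two vertices, λ ∈ ℕ, 𝒩(λ) the family of λ-cut remainder sets of G, n_u ∈ ℕ, ε > 0, M ∈ ℝ, and r ∈ ℝ. Suppose c : V → ℝ satisfies: (a) Σ_{v∈V} c(v) = 0; (b) −r ≤ Σ_{v∈N} c(v) ≤ r for every N ∈ 𝒩(λ); (c) for every nonempty proper subset S ⊊ V with G[S] connected there exists β_S ∈ {0,1} with ε − M·β_S ≤ Σ_{v∈S} c(v) ≤ −ε + M·(1 − β_S); and (d) for every nonempty proper subset S ⊊ V with G[S] connected, S ∉ 𝒩(λ) and V ∖ S ∉ 𝒩(λ), there exists γ_S ∈ {0,1} with n_u·r − M·γ_S ≤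 Σ_{v∈S} c(v) ≤ −n_u·r + M·(1 − γ_S). Then c is W(λ)-uniquely balanced: c is uniquely balanced with respect to G, |Σ_{v∈N} c(v)| ≤ r for every N ∈ 𝒩(λ), and |Σ_{v∈S} c(v)| ≥ n_u·r for every nonempty proper S ⊊ V with G[S] connected, S ∉ 𝒩(λ) and V ∖ S ∉ 𝒩(λ). -/
open scoped Classical

/-- **correctness of the MILP of Remark 2.** Any `c : V → ℝ` feasible for the
mixed-integer linear program (3) — i.e. satisfying (a) zero total sum, (b) `−r ≤ Σ_N c ≤ r`
for every λ-cut remainder set `N`, (c) big-M disjunctive bounds forcing `|Σ_S c| ≥ ε` for every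
nonempty proper connected-inducing `S`, and (d) big-M disjunctive bounds forcing
`|Σ_S c| ≥ n_u·r` whenever neither `S` nor its complement is a λ-cut remainder set — is
W(λ)-uniquely balanced. -/
theorem milp_yields_W_uniquely_balanced
    {V : Type} [Fintype V] [DecidableEq V]
    (G : SimpleGraph V) (hG : G.Connected) (hcard : 2 ≤ Fintype.card V)
    (lam : ℕ) (nu : ℕ) (ε M r : ℝ) (hε : 0 < ε)
    (c : V → ℝ)
    (ha : ∑ v, c v = 0)
    (hb : ∀ N : Set V, IsLamCutRemainder G lam N →
      -r ≤ ∑ v ∈ N.toFinset, c v ∧ ∑ v ∈ N.toFinset, c v ≤ r)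
    (hc : ∀ S : Set V, S.Nonempty → S ≠ Set.univ → (G.induce S).Connected →
      ∃ β : ℝ, (β = 0 ∨ β = 1) ∧
        ε - M * β ≤ ∑ v ∈ S.toFinset, c v ∧
        ∑ v ∈ S.toFinset, c v ≤ -ε + M * (1 - β))
    (hd : ∀ S : Set V, S.Nonempty → S ≠ Set.univ → (G.induce S).Connected →
      ¬ IsLamCutRemainder G lam S → ¬ IsLamCutRemainder G lam Sᶜ →
      ∃ γ : ℝ, (γ = 0 ∨ γ = 1) ∧
        (nu : ℝ) * r - M * γ ≤ ∑ v ∈ S.toFinset, c v ∧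
        ∑ v ∈ S.toFinset, c v ≤ -((nu : ℝ) * r) + M * (1 - γ)) :
    UniquelyBalanced G c ∧
      (∀ N : Set V, IsLamCutRemainder G lam N → |∑ v ∈ N.toFinset, c v| ≤ r) ∧
      (∀ S : Set V, S.Nonempty → S ≠ Set.univ → (G.induce S).Connected →
        ¬ IsLamCutRemainder G lam S → ¬ IsLamCutRemainder G lam Sᶜ →
        (nu : ℝ) * r ≤ |∑ v ∈ S.toFinset, c v|) := by
  refine ⟨⟨ha, ?_⟩, ?_, ?_⟩
  · intro S hne hprop hconn
    obtain ⟨β, hβ01, h1, h2⟩ := hc S hne hprop hconn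
    rcases hβ01 with hβ | hβ
    · subst hβ; simp only [mul_zero, sub_zero] at h1; linarith
    · subst hβ; simp only [sub_self, mul_zero] at h2; linarith
  · intro N hN
    obtain ⟨h1, h2⟩ := hb N hN
    exact abs_le.mpr ⟨h1, h2⟩
  · intro S hne hprop hconn hS hSc
    obtain ⟨γ, hγ01, h1, h2⟩ := hd S hne hprop hconn hS hSc
    rcases hγ01 with hγ | hγ
    · subst hγ; simp only [mul_zero, sub_zero] at h1
      calc (nu : ℝ) * r ≤ ∑ v ∈ S.toFinset, c v := h1
        _ ≤ |∑ v ∈ S.toFinset, c v| := le_abs_self _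
    · subst hγ; simp only [sub_self, mul_zero] at h2
      calc (nu : ℝ) * r ≤ -(∑ v ∈ S.toFinset, c v) := by linarith
        _ ≤ |∑ v ∈ S.toFinset, c v| := neg_le_abs _
end
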